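/- Let H be a complex N_r × N_t matrix of rank r ≥ 1, and let K be a positive integer with K·r ≥ min(N_i, N_o). Then for every complex N_o × N_i matrix W there exist matrices C_k ∈ C^{N_r × N_o} and P_k ∈ C^{N_t × N_i}, k = 1, ..., K, such that W = ∑_{k=1}^K C_k^H H P_k. -/

import Mathlib

/-!
A rank-`r` matrix `H` contains an `r × r` identity: `X * H * Y = 1` for suitable `X`, `Y`.
Cutting the columns of `W` (or its rows, whichever are fewer) into `K` blocks of at most `r`,
each block is routed through one copy of this identity, giving `W = ∑ₖ Cₖᴴ * H * Pₖ`.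
-/

open Matrix

namespace Matrix

variable {R : Type*}

theorem exists_mul_mul_eq_one_of_rank_eq [Field R] {m n : Type*} [Fintype m] [Fintype n]
    {r : ℕ} (A : Matrix m n R) (hA : A.rank = r) :
    ∃ (X : Matrix (Fin r) m R) (Y : Matrix n (Fin r) R), X * A * Y = 1 := by
  classical
  let f := A.mulVecLin
  let V := LinearMap.range f
  let e : V ≃ₗ[R] (Fin r → R) := (Module.finBasisOfFinrankEq R V hA).equivFun
  obtain ⟨p, hp⟩ := V.subtype.exists_leftInverse_of_injective V.ker_subtype
  obtain ⟨s, hs⟩ := f.rangeRestrict.exists_rightInverse_of_surjective f.range_rangeRestrict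
  -- `X` projects onto the column space and takes coordinates; `Y` lifts them back through `A`.
  refine ⟨LinearMap.toMatrix' (e ∘ₗ p), LinearMap.toMatrix' (s ∘ₗ e.symm), ?_⟩
  have hps (w : V) : p (A *ᵥ s w) = w := by
    change p (V.subtype (f.rangeRestrict (s w))) = w
    rw [← LinearMap.comp_apply f.rangeRestrict, hs, ← LinearMap.comp_apply p, hp]
    rfl
  apply Matrix.toLin'.injective
  refine LinearMap.ext fun v => ?_
  simp [hps]

variable {l m n o q κ ρ : Type*} [Fintype κ] [Fintype ρ]
  [DecidableEq κ] [DecidableEq ρ] [DecidableEq n]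

theorem sum_transpose_mul_submatrix_one [Semiring R] {e : n → κ × ρ} (he : e.Injective) :
    ∑ k, ((1 : Matrix (κ × ρ) (κ × ρ) R).submatrix (Prod.mk k) e)ᵀ *
      (1 : Matrix (κ × ρ) (κ × ρ) R).submatrix (Prod.mk k) e = 1 := by
  simp only [transpose_submatrix, transpose_one]
  ext j j'
  simp only [sum_apply, mul_apply, submatrix_apply, one_apply]
  rw [← Fintype.sum_prod_type']
  simp [he.eq_iff]

theorem exists_sum_conjTranspose_mul_mul_eq_mul [Semiring R] [InvolutiveStar R]
    [Fintype m] [Fintype l] [Fintype n]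
    (A : Matrix m l R) (X : Matrix ρ m R) (Y : Matrix l ρ R) (hXY : X * A * Y = 1)
    {e : n → κ × ρ} (he : e.Injective) (L : Matrix o n R) (M : Matrix n q R) :
    ∃ (C : κ → Matrix m o R) (P : κ → Matrix l q R), L * M = ∑ k, (C k)ᴴ * A * P k := by
  let B : κ → Matrix ρ n R := fun k =>
    (1 : Matrix (κ × ρ) (κ × ρ) R).submatrix (Prod.mk k) e
  refine ⟨fun k => (L * (B k)ᵀ * X)ᴴ, fun k => Y * B k * M, ?_⟩
  calc L * M = L * (∑ k, (B k)ᵀ * (X * A * Y) * B k) * M := by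
        simp only [hXY, Matrix.mul_one, B, sum_transpose_mul_submatrix_one he]
    _ = ∑ k, ((L * (B k)ᵀ * X)ᴴ)ᴴ * A * (Y * B k * M) := by
        simp only [conjTranspose_conjTranspose, Matrix.mul_sum, Matrix.sum_mul, Matrix.mul_assoc]

end Matrix

theorem feasible_of_Kr_ge_min_general (Nr Nt No Ni K r : ℕ)
    (H : Matrix (Fin Nr) (Fin Nt) ℂ) (hH : H.rank = r) (hKr : min Ni No ≤ K * r) :
    ∀ W : Matrix (Fin No) (Fin Ni) ℂ,
      ∃ (C : Fin K → Matrix (Fin Nr) (Fin No) ℂ)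
        (P : Fin K → Matrix (Fin Nt) (Fin Ni) ℂ),
        W = ∑ k : Fin K, (C k)ᴴ * H * P k := by
  intro W
  obtain ⟨X, Y, hXY⟩ := H.exists_mul_mul_eq_one_of_rank_eq hH
  have embed (n : ℕ) (hn : n ≤ K * r) : Nonempty (Fin n ↪ Fin K × Fin r) :=
    Function.Embedding.nonempty_of_card_le (by simpa using hn)
  rcases min_le_iff.mp hKr with hNi | hNo
  · obtain ⟨e⟩ := embed Ni hNi
    simpa only [Matrix.mul_one] using
      exists_sum_conjTranspose_mul_mul_eq_mul H X Y hXY e.injective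
        W (1 : Matrix (Fin Ni) (Fin Ni) ℂ)
  · obtain ⟨e⟩ := embed No hNo
    simpa only [Matrix.one_mul] using
      exists_sum_conjTranspose_mul_mul_eq_mul H X Y hXY e.injective
        (1 : Matrix (Fin No) (Fin No) ℂ) W

/-- If `K * r ≥ min N_i N_o`, then every `W` can be realized as `∑ k, (C k)ᴴ * H * P k`. -/
theorem feasible_of_Kr_ge_min (Nr Nt No Ni K r : ℕ)
    (H : Matrix (Fin Nr) (Fin Nt) ℂ) (hH : H.rank = r) (hr : 1 ≤ r)
    (hK : 1 ≤ K) (hKr : min Ni No ≤ K * r) :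
    ∀ W : Matrix (Fin No) (Fin Ni) ℂ,
      ∃ (C : Fin K → Matrix (Fin Nr) (Fin No) ℂ)
        (P : Fin K → Matrix (Fin Nt) (Fin Ni) ℂ),
        W = ∑ k : Fin K, (C k)ᴴ * H * P k :=
  feasible_of_Kr_ge_min_general Nr Nt No Ni K r H hH hKr
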